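/- arXiv:2310.18649 — 2 statements merged into one kernel-verified Lean document; each statement's English description precedes it below -/
import Mathlib

section
/- Supercritical decay estimate: if $\alpha>n/\vartheta$, then for every $\ell>0$, $\mathbf{A}_{p\vartheta}^{\alpha\beta}(\ell\colon\omega,\sigma)\le C\,2^{-\ell(\alpha-n/\vartheta)}\,\mathbf{A}_{p\vartheta}^{\alpha\beta}(\omega,\sigma)$, where $\mathbf{A}_{p\vartheta}^{\alpha\beta}(\ell\colon\omega,\sigma)$ is the bump characteristic restricted to rectangles $Q\times P$ with eccentricity $|Q|^{1/n}/|P|^{1/m}=2^{-\ell}$. -/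
open MeasureTheory ENNReal Set

noncomputable section

abbrev En (n : ℕ) : Type := EuclideanSpace ℝ (Fin n)

/-- The cube in `ℝⁿ` with center `c` and half side-length `h`. -/
def cube {n : ℕ} (c : En n) (h : ℝ) : Set (En n) := {x | ∀ i, |x i - c i| ≤ h}

/-- The dyadic cone `Γ_ℓ(x,y) = {(u,v) : 2^{-ℓ} ≤ |x-u|/|y-v| < 2^{-ℓ+1}}`. -/
def cone {n m : ℕ} (ℓ : ℤ) (x : En n) (y : En m) : Set (En n × En m) :=
  {z | z.2 ≠ y ∧ (2:ℝ) ^ (-ℓ) ≤ ‖x - z.1‖ / ‖y - z.2‖ ∧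
        ‖x - z.1‖ / ‖y - z.2‖ < (2:ℝ) ^ (-ℓ + 1)}

/-- The strong fractional integral kernel `|x-u|^{α-n} |y-v|^{β-m}`. -/
def kern {n m : ℕ} (α β : ℝ) (x : En n) (y : En m) (z : En n × En m) : ℝ≥0∞ :=
  ENNReal.ofReal (‖x - z.1‖ ^ (α - (n:ℝ)) * ‖y - z.2‖ ^ (β - (m:ℝ)))

/-- The strong fractional integral `I_{αβ} f`. -/
def Iab {n m : ℕ} (α β : ℝ) (f : En n × En m → ℝ≥0∞) (x : En n) (y : En m) : ℝ≥0∞ :=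
  ∫⁻ z, f z * kern α β x y z

/-- The cone piece `Δ_ℓ I_{αβ} f`. -/
def DeltaI {n m : ℕ} (α β : ℝ) (ℓ : ℤ) (f : En n × En m → ℝ≥0∞) (x : En n) (y : En m) : ℝ≥0∞ :=
  ∫⁻ z in cone ℓ x y, f z * kern α β x y z

/-- The one-parameter fractional integral of order `α+β` on `ℝ^{n+m}`. -/
def Ione {n m : ℕ} (α β : ℝ) (g : En n × En m → ℝ≥0∞) (x : En n) (y : En m) : ℝ≥0∞ :=
  ∫⁻ z, g z * ENNReal.ofReal ((‖x - z.1‖ ^ 2 + ‖y - z.2‖ ^ 2) ^ ((α + β - (n:ℝ) - (m:ℝ)) / 2))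

/-- `B_{pr}[R](ω,σ)`. -/
def Bloc {n m : ℕ} (p r : ℝ) (ω σ : En n × En m → ℝ≥0∞) (R : Set (En n × En m)) : ℝ≥0∞ :=
  (∫⁻ z in R, ω z ^ (p * r)) ^ (1 / (p * r)) *
  (∫⁻ z in R, (σ z)⁻¹ ^ (p * r / (p - 1))) ^ ((p - 1) / (p * r))

/-- `A_{pr}^{αβ}[Q × P](ω,σ)`. -/
def Aloc (n m : ℕ) (α β p r : ℝ) (ω σ : En n × En m → ℝ≥0∞)
    (Q : Set (En n)) (P : Set (En m)) : ℝ≥0∞ :=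
  volume Q ^ (α / n - 1 / r) * volume P ^ (β / m - 1 / r) * Bloc p r ω σ (Q ×ˢ P)

/-- The multi-parameter `r`-bump characteristic `A_{pr}^{αβ}(ω,σ)`. -/
def Abump (n m : ℕ) (α β p r : ℝ) (ω σ : En n × En m → ℝ≥0∞) : ℝ≥0∞ :=
  ⨆ (cQ : En n) (a : ℝ) (_ : 0 < a) (cP : En m) (b : ℝ) (_ : 0 < b),
    Aloc n m α β p r ω σ (cube cQ a) (cube cP b)

/-- The bump characteristic restricted to eccentricity `|Q|^{1/n}/|P|^{1/m} = 2^{-ℓ}`,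
i.e. rectangles whose `Q`-side is `2^{-ℓ}` times the `P`-side. -/
def AbumpEcc (n m : ℕ) (α β p r : ℝ) (ω σ : En n × En m → ℝ≥0∞) (ℓ : ℤ) : ℝ≥0∞ :=
  ⨆ (cQ : En n) (a : ℝ) (_ : 0 < a) (cP : En m) (b : ℝ) (_ : 0 < b)
    (_ : a = (2:ℝ) ^ (-ℓ) * b),
    Aloc n m α β p r ω σ (cube cQ a) (cube cP b)

/-- Normalized (averaged) localized bump quantity `A_{qr}^{αβ}[R](ω,σ)`. -/
def AlocN (n m : ℕ) (α β q r : ℝ) (ω σ : En n × En m → ℝ≥0∞)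
    (Q : Set (En n)) (P : Set (En m)) : ℝ≥0∞ :=
  volume Q ^ (α / n) * volume P ^ (β / m) *
  ((volume (Q ×ˢ P))⁻¹ * ∫⁻ z in Q ×ˢ P, ω z ^ (q * r)) ^ (1 / (q * r)) *
  ((volume (Q ×ˢ P))⁻¹ * ∫⁻ z in Q ×ˢ P, (σ z)⁻¹ ^ (q * r / (q - 1))) ^ ((q - 1) / (q * r))

/-! Enlarge `Q` to the concentric cube `Q'` with the side length of `P`. The bump factor `Bloc`
only grows with the domain, while `|Q|^{α/n - 1/ϑ} = 2^{-ℓ(α - n/ϑ)} |Q'|^{α/n - 1/ϑ}`; so the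
estimate holds with `C = 1`. -/

lemma volume_cube {n : ℕ} (c : En n) (h : ℝ) :
    volume (cube c h) = ENNReal.ofReal (2 * h) ^ n := by
  have hcube : cube c h = (MeasurableEquiv.toLp 2 (Fin n → ℝ)).symm ⁻¹'
      univ.pi fun i => Icc (c i - h) (c i + h) := by
    ext x
    simp only [cube, mem_ofPred_eq, mem_preimage, mem_pi, mem_univ, forall_true_left, mem_Icc]
    refine forall_congr' fun i => ?_
    show |x i - c i| ≤ h ↔ c i - h ≤ x i ∧ x i ≤ c i + h
    rw [abs_le]
    constructor <;> intro hx <;> constructor <;> linarith [hx.1, hx.2]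
  rw [hcube, (EuclideanSpace.volume_preserving_symm_measurableEquiv_toLp (Fin n)).measure_preimage
    (MeasurableSet.univ_pi fun _ => measurableSet_Icc).nullMeasurableSet, volume_pi_pi]
  simp [Real.volume_Icc, two_mul, add_sub_assoc, add_comm]

lemma cube_mono {n : ℕ} (c : En n) {a b : ℝ} (hab : a ≤ b) : cube c a ⊆ cube c b :=
  fun _ hx i => (hx i).trans hab

lemma volume_cube_mul_rpow {n : ℕ} (c : En n) {t : ℝ} (ht : 0 ≤ t) (h e : ℝ) :
    volume (cube c (t * h)) ^ e = ENNReal.ofReal t ^ (n * e) * volume (cube c h) ^ e := by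
  rw [volume_cube, volume_cube, mul_left_comm, ENNReal.ofReal_mul ht, mul_pow,
    ENNReal.mul_rpow_of_ne_top (pow_ne_top ofReal_ne_top) (pow_ne_top ofReal_ne_top),
    ← ENNReal.rpow_natCast, ← ENNReal.rpow_mul]

lemma Bloc_mono {n m : ℕ} {p r : ℝ} (hp : 1 ≤ p) (hr : 0 ≤ r)
    (ω σ : En n × En m → ℝ≥0∞) {R S : Set (En n × En m)} (hRS : R ⊆ S) :
    Bloc p r ω σ R ≤ Bloc p r ω σ S := by
  have hpr : 0 ≤ p * r := by positivity
  exact mul_le_mul' (rpow_le_rpow (lintegral_mono_set hRS) (div_nonneg zero_le_one hpr))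
    (rpow_le_rpow (lintegral_mono_set hRS) (div_nonneg (by linarith) hpr))

lemma Aloc_cube_mul_le {n m : ℕ} (hn : n ≠ 0) {α β p r : ℝ} (hp : 1 ≤ p) (hr : 0 ≤ r)
    (ω σ : En n × En m → ℝ≥0∞) (cQ : En n) {t : ℝ} (ht0 : 0 ≤ t) (ht1 : t ≤ 1) {h : ℝ}
    (hh : 0 ≤ h) (P : Set (En m)) :
    Aloc n m α β p r ω σ (cube cQ (t * h)) P ≤
      ENNReal.ofReal t ^ (α - n / r) * Aloc n m α β p r ω σ (cube cQ h) P := by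
  have hexp : (n : ℝ) * (α / n - 1 / r) = α - n / r := by field_simp
  have hsub : cube cQ (t * h) ×ˢ P ⊆ cube cQ h ×ˢ P :=
    prod_mono_left (cube_mono cQ (mul_le_of_le_one_left hh ht1))
  simp only [Aloc, volume_cube_mul_rpow cQ ht0, hexp, mul_assoc]
  gcongr
  exact Bloc_mono hp hr ω σ hsub

lemma Aloc_cube_le_Abump (n m : ℕ) (α β p r : ℝ) (ω σ : En n × En m → ℝ≥0∞)
    (cQ : En n) {a : ℝ} (ha : 0 < a) (cP : En m) {b : ℝ} (hb : 0 < b) :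
    Aloc n m α β p r ω σ (cube cQ a) (cube cP b) ≤ Abump n m α β p r ω σ :=
  le_iSup_of_le cQ <| le_iSup_of_le a <| le_iSup_of_le ha <| le_iSup_of_le cP <|
    le_iSup_of_le b <| le_iSup_of_le hb le_rfl

lemma ofReal_two_zpow_neg_rpow (ℓ : ℤ) (e : ℝ) :
    ENNReal.ofReal ((2 : ℝ) ^ (-ℓ)) ^ e = (2 : ℝ≥0∞) ^ (-(ℓ : ℝ) * e) := by
  rw [← Real.rpow_intCast, ← ENNReal.ofReal_rpow_of_pos two_pos, ENNReal.ofReal_ofNat,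
    ← ENNReal.rpow_mul, Int.cast_neg]

theorem stmt7_general (n m : ℕ) (hn : 0 < n) (α β p ϑ : ℝ) (hp : 1 < p) (hϑ : 1 < ϑ)
    (ω σ : En n × En m → ℝ≥0∞) :
    ∃ C : ℝ≥0∞, 0 < C ∧ C ≠ ⊤ ∧ ∀ ℓ : ℤ, 0 < ℓ →
      AbumpEcc n m α β p ϑ ω σ ℓ ≤
        C * (2:ℝ≥0∞) ^ (-(ℓ:ℝ) * (α - n / ϑ)) * Abump n m α β p ϑ ω σ := by
  refine ⟨1, one_pos, one_ne_top, fun ℓ hℓ => ?_⟩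
  have hshrink : (2 : ℝ) ^ (-ℓ) ≤ 1 := zpow_le_one_of_nonpos₀ one_le_two (neg_nonpos.mpr hℓ.le)
  refine iSup_le fun cQ => iSup_le fun a => iSup_le fun _ => iSup_le fun cP =>
    iSup_le fun b => iSup_le fun hb => iSup_le fun hab => ?_
  subst hab
  calc Aloc n m α β p ϑ ω σ (cube cQ ((2 : ℝ) ^ (-ℓ) * b)) (cube cP b)
      ≤ ENNReal.ofReal ((2 : ℝ) ^ (-ℓ)) ^ (α - n / ϑ) *
          Aloc n m α β p ϑ ω σ (cube cQ b) (cube cP b) :=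
        Aloc_cube_mul_le hn.ne' hp.le (by linarith) ω σ cQ (by positivity) hshrink hb.le _
    _ ≤ 1 * (2 : ℝ≥0∞) ^ (-(ℓ : ℝ) * (α - n / ϑ)) * Abump n m α β p ϑ ω σ := by
        rw [one_mul, ofReal_two_zpow_neg_rpow]
        gcongr
        exact Aloc_cube_le_Abump n m α β p ϑ ω σ cQ hb cP hb

/-- Supercritical decay: if `α > n/ϑ` then the eccentricity-`2^{-ℓ}` bump
characteristic decays like `2^{-ℓ(α - n/ϑ)}`. -/
theorem stmt7 (n m : ℕ) (hn : 0 < n) (hm : 0 < m) (α β p ϑ : ℝ)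
    (hα0 : 0 < α) (hαn : α < n) (hβ0 : 0 < β) (hβm : β < m) (hp : 1 < p) (hϑ : 1 < ϑ)
    (hsup : (n:ℝ) / ϑ < α) (ω σ : En n × En m → ℝ≥0∞)
    (hω : Measurable ω) (hσ : Measurable σ) :
    ∃ C : ℝ≥0∞, 0 < C ∧ C ≠ ⊤ ∧ ∀ ℓ : ℤ, 0 < ℓ →
      AbumpEcc n m α β p ϑ ω σ ℓ ≤
        C * (2:ℝ≥0∞) ^ (-(ℓ:ℝ) * (α - n / ϑ)) * Abump n m α β p ϑ ω σ :=
  stmt7_general n m hn α β p ϑ hp hϑ ω σ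
end
end

section
/- Bump comparison with exponent gain: suppose for a rectangle $Q\times P$ and $\ell>0$ the ratio bounds $\big(\iint_{Q^\ell\times P}\omega^{pr}\big)^{1/(pr)}\le C 2^{\ell(\alpha-n/r)\lambda_\omega}\big(\iint_{Q\times P}\omega^{pr}\big)^{1/(pr)}$ and $\big(\iint_{Q^\ell\times P}\sigma^{-ps/(p-1)}\big)^{(p-1)/(ps)}\le C 2^{\ell(\alpha-n/s)\mu_\sigma}\big(\iint_{Q\times P}\sigma^{-ps/(p-1)}\big)^{(p-1)/(ps)}$ hold, with $\mu_\omega+\mu_\sigma\ge1$. Then $\mathbf{A}_{pr}^{\alpha\beta}[Q^\ell\times P](\omega,\sigma)\le C'\,2^{-\ell\gamma_\omega}\,\mathbf{A}_{ps}^{\alpha\beta}[Q\times P](\omega,\sigma)$, where $\gamma_\omega=(\mu_\omega-\lambda_\omega)(\alpha-n/r)+n(1/r-1/s)(\mu_\omega-1/p)$. -/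
open MeasureTheory ENNReal Set

noncomputable section

lemma volume_cube_ne_zero {n : ℕ} (c : En n) {h : ℝ} (hh : 0 < h) : volume (cube c h) ≠ 0 := by
  rw [volume_cube]
  exact pow_ne_zero _ (ENNReal.ofReal_pos.2 (by positivity)).ne'

lemma volume_cube_ne_top {n : ℕ} (c : En n) (h : ℝ) : volume (cube c h) ≠ ⊤ := by
  rw [volume_cube]
  exact ENNReal.pow_ne_top ENNReal.ofReal_ne_top

lemma volume_cube_mul {n : ℕ} (c : En n) {t : ℝ} (ht : 0 ≤ t) (h : ℝ) :
    volume (cube c (t * h)) = ENNReal.ofReal t ^ n * volume (cube c h) := by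
  rw [volume_cube, volume_cube, ← mul_pow, ← ENNReal.ofReal_mul ht, mul_left_comm]

lemma setLIntegral_rpow_rpow_le {X : Type*} [MeasurableSpace X] {μ : Measure X} {f : X → ℝ≥0∞}
    (hf : Measurable f) (R : Set X) {q₁ q₂ : ℝ} (hq₁ : 0 < q₁) (hq : q₁ ≤ q₂) :
    (∫⁻ x in R, f x ^ q₁ ∂μ) ^ (1 / q₁) ≤
      μ R ^ (1 / q₁ - 1 / q₂) * (∫⁻ x in R, f x ^ q₂ ∂μ) ^ (1 / q₂) := by
  simpa [eLpNorm', Measure.restrict_apply_univ, mul_comm] using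
    eLpNorm'_le_eLpNorm'_mul_rpow_measure_univ hq₁ hq hf.aestronglyMeasurable (μ := μ.restrict R)

theorem Aloc_le_of_ratio_bounds {n m : ℕ} {α β p r s : ℝ} (hp : 1 < p) (hr : 0 < r)
    (hrs : r ≤ s) {ω σ : En n × En m → ℝ≥0∞} (hω : Measurable ω) (hσ : Measurable σ)
    {Q' Q : Set (En n)} {P : Set (En m)} {κ c₁ c₂ : ℝ≥0∞} (hQ' : volume Q' = κ * volume Q)
    (hκ₀ : κ ≠ 0) (hκ : κ ≠ ⊤) (hQ₀ : volume Q ≠ 0) (hQ : volume Q ≠ ⊤)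
    (hP₀ : volume P ≠ 0) (hP : volume P ≠ ⊤)
    (hωQ' : (∫⁻ z in Q' ×ˢ P, ω z ^ (p * r)) ^ (1 / (p * r)) ≤
      c₁ * (∫⁻ z in Q ×ˢ P, ω z ^ (p * r)) ^ (1 / (p * r)))
    (hσQ' : (∫⁻ z in Q' ×ˢ P, (σ z)⁻¹ ^ (p * s / (p - 1))) ^ ((p - 1) / (p * s)) ≤
      c₂ * (∫⁻ z in Q ×ˢ P, (σ z)⁻¹ ^ (p * s / (p - 1))) ^ ((p - 1) / (p * s))) :
    Aloc n m α β p r ω σ Q' P ≤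
      c₁ * c₂ * κ ^ (α / n - 1 / r + ((p - 1) / (p * r) - (p - 1) / (p * s))) *
        Aloc n m α β p s ω σ Q P := by
  have hp₀ : 0 < p := one_pos.trans hp
  have hpr : p * r ≤ p * s := by gcongr
  have hp₁ : 0 < p - 1 := sub_pos.2 hp
  have hvol : ∀ Q : Set (En n), volume (Q ×ˢ P) = volume Q * volume P := fun Q => by
    rw [Measure.volume_eq_prod, Measure.prod_prod]
  set V := volume Q
  set U := volume P
  set d := 1 / (p * r) - 1 / (p * s)
  set d' := (p - 1) / (p * r) - (p - 1) / (p * s)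
  have hω' := setLIntegral_rpow_rpow_le hω (Q ×ˢ P) (mul_pos hp₀ hr) hpr (μ := volume)
  have hσ' := setLIntegral_rpow_rpow_le hσ.inv (Q' ×ˢ P) (by positivity)
    (div_le_div_of_nonneg_right hpr hp₁.le) (μ := volume)
  rw [one_div_div, one_div_div, hvol] at hσ'
  rw [hvol] at hω'
  have hdd' : d + d' = 1 / r - 1 / s := by
    simp only [d, d']
    field_simp
    ring
  have hr_exp : α / n - 1 / s = α / n - 1 / r + d + d' := by linarith
  have hs_exp : β / m - 1 / s = β / m - 1 / r + d + d' := by linarith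
  calc Aloc n m α β p r ω σ Q' P
      = (κ * V) ^ (α / n - 1 / r) * U ^ (β / m - 1 / r) *
          ((∫⁻ z in Q' ×ˢ P, ω z ^ (p * r)) ^ (1 / (p * r)) *
            (∫⁻ z in Q' ×ˢ P, (σ z)⁻¹ ^ (p * r / (p - 1))) ^ ((p - 1) / (p * r))) := by
        rw [Aloc, Bloc, hQ']
    _ ≤ (κ * V) ^ (α / n - 1 / r) * U ^ (β / m - 1 / r) *
          (c₁ * ((V * U) ^ d * (∫⁻ z in Q ×ˢ P, ω z ^ (p * s)) ^ (1 / (p * s))) *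
            ((κ * V * U) ^ d' * (c₂ *
              (∫⁻ z in Q ×ˢ P, (σ z)⁻¹ ^ (p * s / (p - 1))) ^ ((p - 1) / (p * s))))) := by
        gcongr
        · exact hωQ'.trans (by gcongr)
        · rw [← hQ']
          exact hσ'.trans (by gcongr; exact hσQ')
    _ = c₁ * c₂ * κ ^ (α / n - 1 / r + d') * Aloc n m α β p s ω σ Q P := by
        rw [Aloc, Bloc, hr_exp, hs_exp, ENNReal.mul_rpow_of_ne_zero hκ₀ hQ₀,
          ENNReal.mul_rpow_of_ne_zero hQ₀ hP₀, ENNReal.mul_rpow_of_ne_zero (mul_ne_zero hκ₀ hQ₀) hP₀,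
          ENNReal.mul_rpow_of_ne_zero hκ₀ hQ₀, ENNReal.rpow_add _ _ hκ₀ hκ,
          ENNReal.rpow_add _ _ hQ₀ hQ, ENNReal.rpow_add _ _ hQ₀ hQ,
          ENNReal.rpow_add _ _ hP₀ hP, ENNReal.rpow_add _ _ hP₀ hP]
        ring

lemma exponent_gain_le {n α p r s lω μω μσ L : ℝ} (hn : n ≠ 0) (hp : p ≠ 0) (hr : r ≠ 0)
    (hs : s ≠ 0) (hL : 0 ≤ L) (hαs : α ≤ n / s) (hμ : 1 ≤ μω + μσ) :
    L * (α - n / r) * lω + L * (α - n / s) * μσ +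
        -L * n * (α / n - 1 / r + ((p - 1) / (p * r) - (p - 1) / (p * s))) ≤
      -L * ((μω - lω) * (α - n / r) + n * (1 / r - 1 / s) * (μω - 1 / p)) := by
  have hgap : -L * ((μω - lω) * (α - n / r) + n * (1 / r - 1 / s) * (μω - 1 / p)) -
      (L * (α - n / r) * lω + L * (α - n / s) * μσ +
        -L * n * (α / n - 1 / r + ((p - 1) / (p * r) - (p - 1) / (p * s)))) =
      L * (n / s - α) * (μω + μσ - 1) := by
    field_simp
    ring
  nlinarith [mul_nonneg (mul_nonneg hL (sub_nonneg.2 hαs)) (sub_nonneg.2 hμ)]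

theorem stmt14_general (n m : ℕ) (hn : 0 < n) (α β p r s : ℝ)
    (hp : 1 < p) (hr : 1 < r) (hrs : r < s) (hαs : α ≤ n / s)
    (ω σ : En n × En m → ℝ≥0∞) (hω : Measurable ω) (hσ : Measurable σ)
    (C : ℝ≥0∞) (hC : C ≠ ⊤) :
    ∃ C' : ℝ≥0∞, C' ≠ ⊤ ∧
      ∀ (cQ : En n) (a : ℝ) (_ : 0 < a) (cP : En m) (b : ℝ) (_ : 0 < b)
        (ℓ : ℤ) (_ : 0 < ℓ) (lω μω μσ : ℝ)
        (_ : lω ∈ Icc (0:ℝ) 1) (_ : μω ∈ Icc (0:ℝ) 1) (_ : μσ ∈ Icc (0:ℝ) 1)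
        (_ : 1 ≤ μω + μσ),
        ((∫⁻ z in cube cQ ((2:ℝ) ^ (-ℓ) * a) ×ˢ cube cP b, ω z ^ (p * r)) ^ (1 / (p * r)) ≤
          C * (2:ℝ≥0∞) ^ ((ℓ:ℝ) * (α - n / r) * lω) *
            (∫⁻ z in cube cQ a ×ˢ cube cP b, ω z ^ (p * r)) ^ (1 / (p * r))) →
        ((∫⁻ z in cube cQ ((2:ℝ) ^ (-ℓ) * a) ×ˢ cube cP b,
              (σ z)⁻¹ ^ (p * s / (p - 1))) ^ ((p - 1) / (p * s)) ≤
          C * (2:ℝ≥0∞) ^ ((ℓ:ℝ) * (α - n / s) * μσ) *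
            (∫⁻ z in cube cQ a ×ˢ cube cP b,
              (σ z)⁻¹ ^ (p * s / (p - 1))) ^ ((p - 1) / (p * s))) →
        Aloc n m α β p r ω σ (cube cQ ((2:ℝ) ^ (-ℓ) * a)) (cube cP b) ≤
          C' * (2:ℝ≥0∞) ^ (-(ℓ:ℝ) *
              ((μω - lω) * (α - n / r) + n * (1 / r - 1 / s) * (μω - 1 / p))) *
            Aloc n m α β p s ω σ (cube cQ a) (cube cP b) := by
  refine ⟨C * C, ENNReal.mul_ne_top hC hC, ?_⟩
  intro cQ a ha cP b hb ℓ hℓ lω μω μσ _ _ _ hμ hωℓ hσℓ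
  have hr₀ : 0 < r := one_pos.trans hr
  have h2 : (2 : ℝ≥0∞) ≠ 0 := two_ne_zero
  have h2' : (2 : ℝ≥0∞) ≠ ⊤ := ENNReal.ofNat_ne_top
  have hκ : ENNReal.ofReal ((2 : ℝ) ^ (-ℓ)) ^ n = 2 ^ (-(ℓ : ℝ) * n) := by
    rw [← Real.rpow_intCast, ← ENNReal.ofReal_rpow_of_pos two_pos, ENNReal.ofReal_ofNat,
      ← ENNReal.rpow_natCast, ← ENNReal.rpow_mul]
    push_cast
    ring
  calc _
      ≤ C * 2 ^ ((ℓ : ℝ) * (α - n / r) * lω) * (C * 2 ^ ((ℓ : ℝ) * (α - n / s) * μσ)) *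
          (2 ^ (-(ℓ : ℝ) * n)) ^ (α / n - 1 / r + ((p - 1) / (p * r) - (p - 1) / (p * s))) *
          Aloc n m α β p s ω σ (cube cQ a) (cube cP b) := by
        rw [← hκ]
        exact Aloc_le_of_ratio_bounds hp hr₀ hrs.le hω hσ (volume_cube_mul cQ (by positivity) a)
          (pow_ne_zero _ (ENNReal.ofReal_pos.2 (by positivity)).ne')
          (ENNReal.pow_ne_top ENNReal.ofReal_ne_top) (volume_cube_ne_zero cQ ha)
          (volume_cube_ne_top cQ a) (volume_cube_ne_zero cP hb) (volume_cube_ne_top cP b)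
          hωℓ hσℓ
    _ = C * C * 2 ^ ((ℓ : ℝ) * (α - n / r) * lω + (ℓ : ℝ) * (α - n / s) * μσ +
          -(ℓ : ℝ) * n * (α / n - 1 / r + ((p - 1) / (p * r) - (p - 1) / (p * s)))) *
          Aloc n m α β p s ω σ (cube cQ a) (cube cP b) := by
        rw [← ENNReal.rpow_mul, ENNReal.rpow_add _ _ h2 h2', ENNReal.rpow_add _ _ h2 h2']
        ring
    _ ≤ _ := by
        gcongr
        · exact one_le_two
        · exact exponent_gain_le (Nat.cast_pos.2 hn).ne' (by positivity) hr₀.ne'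
            (hr₀.trans hrs).ne' (by positivity) hαs hμ

/-- Bump comparison with exponent gain: from the ratio bounds on `ω` (at exponent
`pr`, with `λ_ω`) and on `σ⁻¹` (at exponent `ps/(p-1)`, with `μ_σ`), together with
`μ_ω + μ_σ ≥ 1` and `α ≤ n/s`, one gets
`A_{pr}^{αβ}[Q^ℓ × P] ≤ C' 2^{-ℓγ_ω} A_{ps}^{αβ}[Q × P]` with
`γ_ω = (μ_ω-λ_ω)(α-n/r) + n(1/r-1/s)(μ_ω-1/p)`. -/
theorem stmt14 (n m : ℕ) (hn : 0 < n) (hm : 0 < m) (α β p r s : ℝ)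
    (hp : 1 < p) (hr : 1 < r) (hrs : r < s) (hα0 : 0 < α) (hαs : α ≤ n / s)
    (hβ0 : 0 < β) (hβm : β < m)
    (ω σ : En n × En m → ℝ≥0∞) (hω : Measurable ω) (hσ : Measurable σ)
    (C : ℝ≥0∞) (hC0 : 0 < C) (hC : C ≠ ⊤) :
    ∃ C' : ℝ≥0∞, C' ≠ ⊤ ∧
      ∀ (cQ : En n) (a : ℝ) (_ : 0 < a) (cP : En m) (b : ℝ) (_ : 0 < b)
        (ℓ : ℤ) (_ : 0 < ℓ) (lω μω μσ : ℝ)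
        (_ : lω ∈ Icc (0:ℝ) 1) (_ : μω ∈ Icc (0:ℝ) 1) (_ : μσ ∈ Icc (0:ℝ) 1)
        (_ : 1 ≤ μω + μσ),
        ((∫⁻ z in cube cQ ((2:ℝ) ^ (-ℓ) * a) ×ˢ cube cP b, ω z ^ (p * r)) ^ (1 / (p * r)) ≤
          C * (2:ℝ≥0∞) ^ ((ℓ:ℝ) * (α - n / r) * lω) *
            (∫⁻ z in cube cQ a ×ˢ cube cP b, ω z ^ (p * r)) ^ (1 / (p * r))) →
        ((∫⁻ z in cube cQ ((2:ℝ) ^ (-ℓ) * a) ×ˢ cube cP b,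
              (σ z)⁻¹ ^ (p * s / (p - 1))) ^ ((p - 1) / (p * s)) ≤
          C * (2:ℝ≥0∞) ^ ((ℓ:ℝ) * (α - n / s) * μσ) *
            (∫⁻ z in cube cQ a ×ˢ cube cP b,
              (σ z)⁻¹ ^ (p * s / (p - 1))) ^ ((p - 1) / (p * s))) →
        Aloc n m α β p r ω σ (cube cQ ((2:ℝ) ^ (-ℓ) * a)) (cube cP b) ≤
          C' * (2:ℝ≥0∞) ^ (-(ℓ:ℝ) *
              ((μω - lω) * (α - n / r) + n * (1 / r - 1 / s) * (μω - 1 / p))) *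
            Aloc n m α β p s ω σ (cube cQ a) (cube cP b) :=
  stmt14_general n m hn α β p r s hp hr hrs hαs ω σ hω hσ C hC
end
end
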